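/- For a bipartite graph G, the directed edge matrix A_e, with arcs ordered so that all arcs from U to W come first, has the block anti-diagonal form [[0, B_e],[C_e, 0]] for some |E|×|E| matrices B_e, C_e; consequently the spectrum of A_e is symmetric with respect to the origin: η is an eigenvalue of A_e with multiplicity k if and only if −η is an eigenvalue with multiplicity k. -/

import Mathlib

/-!
Colour the vertices by their side `U` or `W`. A transition `e → f` of the directed edge matrix
has `o(f) = t(e)`, which lies on the other side than `o(e)`, so `A_e` only has entries between arcs
whose origins have different colours. Conjugating by the diagonal matrix `D` with entries `±1`
according to the colour of the origin therefore gives `D A_e D = -A_e`, whence `A_e` and `-A_e` have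
the same characteristic polynomial; and a root `η` of `χ_{-A}` has the same multiplicity as the
root `-η` of `χ_A`, since `χ_{-A}(X) = ±χ_A(-X)`.
-/

open SimpleGraph Matrix Polynomial

def edgeMatrix {V : Type*} [DecidableEq V] (G : SimpleGraph V) [DecidableRel G.Adj]
    (R : Type*) [Zero R] [One R] : Matrix G.Dart G.Dart R :=
  fun e f => if e.snd = f.fst ∧ f ≠ e.symm then 1 else 0

theorem edgeMatrix_apply_eq_zero_of_color_eq {V α : Type*} [DecidableEq V]
    {G : SimpleGraph V} [DecidableRel G.Adj] {R : Type*} [Zero R] [One R]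
    (c : G.Coloring α) {d d' : G.Dart} (h : c d.fst = c d'.fst) : edgeMatrix G R d d' = 0 :=
  if_neg fun ⟨hsnd, _⟩ => c.valid d.adj (hsnd ▸ h)

namespace Matrix

variable {n R : Type*} [Fintype n] [DecidableEq n] [CommRing R]

theorem charpoly_neg (M : Matrix n n R) :
    (-M).charpoly = (-1) ^ Fintype.card n * M.charpoly.comp (-X) := by
  have hmap : (charmatrix M).map (compRingHom (-X)) = -charmatrix (-M) := by
    ext i j
    by_cases hij : i = j
    · subst hij
      simp [charmatrix_apply_eq]
      ring
    · simp [charmatrix_apply_ne _ _ _ hij]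
  have hdet := RingHom.map_det (compRingHom (-X)) (charmatrix M)
  rw [RingHom.mapMatrix_apply, hmap, det_neg] at hdet
  simp only [charpoly, coe_compRingHom_apply] at hdet ⊢
  rw [hdet, ← mul_assoc, ← pow_add, ← two_mul, pow_mul]
  simp

theorem rootMultiplicity_charpoly_neg [IsDomain R] (M : Matrix n n R) (a : R) :
    (-M).charpoly.rootMultiplicity a = M.charpoly.rootMultiplicity (-a) := by
  have hcomp : M.charpoly.comp (-X) = M.charpoly.comp (C (-1) * X + C 0) := by simp
  have hne : M.charpoly.comp (-X) ≠ 0 := comp_neg_X_eq_zero_iff.not.2 M.charpoly_monic.ne_zero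
  rw [charpoly_neg, ← C_1, ← C_neg, ← C_pow, rootMultiplicity_mul (mul_ne_zero (by simp) hne),
    rootMultiplicity_C, zero_add, hcomp, rootMultiplicity_comp_C_mul_X_add_C _ _ _ _ isUnit_neg_one]
  simp

theorem charpoly_neg_eq_of_block_antidiagonal (M : Matrix n n R) (c : n → Bool)
    (hM : ∀ i j, c i = c j → M i j = 0) : (-M).charpoly = M.charpoly := by
  let D : Matrix n n R := diagonal fun i => if c i then 1 else -1
  have hDD : D * D = 1 := by
    rw [diagonal_mul_diagonal, ← diagonal_one]
    congr 1
    ext i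
    split_ifs <;> simp
  have hconj : D * M * D = -M := by
    ext i j
    simp only [D, diagonal_mul, mul_diagonal, neg_apply]
    by_cases h : c i = c j
    · simp [hM i j h]
    · cases hi : c i <;> cases hj : c j <;> simp_all
  rw [← hconj, charpoly_mul_comm, ← mul_assoc, hDD, one_mul]

end Matrix

/-- For a bipartite graph, the directed edge matrix is block anti-diagonal with respect
to the partition of arcs into those oriented from `U` to `W` and those from `W` to `U`
(entries between arcs with origins on the same side vanish); consequently its spectrum
is symmetric with respect to the origin: `η` is an eigenvalue with multiplicity `k` iff
`-η` is an eigenvalue with multiplicity `k`. -/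
theorem edgeMatrix_bipartite_block_antidiagonal {U W : Type*} [Fintype U] [Fintype W]
    [DecidableEq U] [DecidableEq W]
    (G : SimpleGraph (U ⊕ W)) [DecidableRel G.Adj]
    (hbipL : ∀ u u' : U, ¬ G.Adj (Sum.inl u) (Sum.inl u'))
    (hbipR : ∀ w w' : W, ¬ G.Adj (Sum.inr w) (Sum.inr w')) :
    (∀ d d' : G.Dart, d.fst.isLeft = d'.fst.isLeft → edgeMatrix G ℂ d d' = 0) ∧
    (∀ η : ℂ, ((edgeMatrix G ℂ).charpoly).rootMultiplicity η =
      ((edgeMatrix G ℂ).charpoly).rootMultiplicity (-η)) := by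
  let side : G.Coloring Bool := Coloring.mk Sum.isLeft <| by
    rintro (u | w) (u' | w') hadj
    exacts [(hbipL u u' hadj).elim, by simp, by simp, (hbipR w w' hadj).elim]
  have hblock (d d' : G.Dart) (h : d.fst.isLeft = d'.fst.isLeft) : edgeMatrix G ℂ d d' = 0 :=
    edgeMatrix_apply_eq_zero_of_color_eq side h
  refine ⟨hblock, fun η => ?_⟩
  rw [← rootMultiplicity_charpoly_neg,
    charpoly_neg_eq_of_block_antidiagonal _ (fun d => d.fst.isLeft) hblock]
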